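/- arXiv:2103.08278 — 2 statements merged into one kernel-verified Lean document; each statement's English description precedes it below -/
import Mathlib

section
/- Let R be a φ-ring and E an R/Nil(R)-module, viewed as an R-module via the quotient map. Then E is an injective R/Nil(R)-module if and only if E is a nonnil-injective R-module. -/
/-!
`Ext¹_R(R/I, E)` is computed from a projective resolution of `R/I` beginning with `R → R/I`: it
vanishes iff every `R`-linear map `I → E` extends to `R`. By Baer's criterion the theorem thus
compares extension problems over `R` and over `R/Nil(R)`. If `I` is nonnil, the divided prime
`Nil(R)` lies in `I` and equals `a • Nil(R)` for any `a ∈ I \ Nil(R)`; as `Nil(R)` kills `E`,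
every `R`-linear map `I → E` kills `Nil(R)`, so it is the same as an `R/Nil(R)`-linear map
`I/Nil(R) → E`, and extending it to `R` is the same as extending it to `R/Nil(R)`. The nonzero
ideals of `R/Nil(R)` are exactly the `I/Nil(R)` with `I` nonnil.
-/

open CategoryTheory LinearMap

universe u

section ExtensionProperty

variable {R M N Y : Type*} [Ring R] [AddCommGroup M] [Module R M] [AddCommGroup N]
  [Module R N] [AddCommGroup Y] [Module R Y]

def Submodule.HasExtensionProperty (K : Submodule R M) (Y : Type*) [AddCommGroup Y]
    [Module R Y] : Prop :=
  ∀ f : K →ₗ[R] Y, ∃ g : M →ₗ[R] Y, g ∘ₗ K.subtype = f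

lemma Submodule.hasExtensionProperty_bot : (⊥ : Submodule R M).HasExtensionProperty Y :=
  fun f ↦ ⟨0, by
    ext ⟨x, hx⟩
    obtain rfl := (Submodule.mem_bot R).mp hx
    exact (map_zero f).symm⟩

lemma Module.baer_iff_forall_hasExtensionProperty :
    Module.Baer R Y ↔ ∀ I : Ideal R, I.HasExtensionProperty Y := by
  refine forall_congr' fun I ↦ forall_congr' fun f ↦ exists_congr fun g ↦ ?_
  rw [LinearMap.ext_iff, Subtype.forall]
  rfl

lemma Function.Surjective.exists_comp_eq_of_ker_le {q : M →ₗ[R] N} (hq : Function.Surjective q)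
    {f : M →ₗ[R] Y} (h : ker q ≤ ker f) : ∃ g : N →ₗ[R] Y, g ∘ₗ q = f :=
  ⟨(ker q).liftQ f h ∘ₗ (q.quotKerEquivOfSurjective hq).symm.toLinearMap, by ext; simp⟩

lemma LinearMap.range_hasExtensionProperty_iff {M₂ : Type*} [AddCommGroup M₂] [Module R M₂]
    {d₂ : M₂ →ₗ[R] M} {d₁ : M →ₗ[R] N} (hd : range d₂ = ker d₁) :
    (range d₁).HasExtensionProperty Y ↔
      ∀ x : M →ₗ[R] Y, x ∘ₗ d₂ = 0 → ∃ y, y ∘ₗ d₁ = x := by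
  constructor
  · intro h x hx
    have hker : ker d₁.rangeRestrict ≤ ker x := by
      rwa [ker_rangeRestrict, ← hd, range_le_ker_iff]
    obtain ⟨f, rfl⟩ := d₁.surjective_rangeRestrict.exists_comp_eq_of_ker_le hker
    obtain ⟨y, hy⟩ := h f
    exact ⟨y, by rw [← hy]; rfl⟩
  · intro h f
    have hd₁d₂ : d₁.rangeRestrict ∘ₗ d₂ = 0 := by
      rw [← range_le_ker_iff, ker_rangeRestrict, hd]
    obtain ⟨g, hg⟩ := h (f ∘ₗ d₁.rangeRestrict) (by rw [comp_assoc, hd₁d₂, comp_zero])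
    refine ⟨g, ?_⟩
    ext ⟨_, m, rfl⟩
    exact congr($hg m)

end ExtensionProperty

namespace CategoryTheory

lemma Projective.d_comp {C : Type*} [Category C] [Abelian C] [EnoughProjectives C] {X Y : C}
    (f : X ⟶ Y) : Projective.d f ≫ f = 0 :=
  (Category.assoc _ _ _).trans ((Limits.kernel.condition f).symm ▸ Limits.comp_zero)

namespace ProjectiveResolution

section Ring

variable {R : Type u} [Ring R]

section OfEpi

variable {P Z : ModuleCat.{u} R} [Projective P] (π : P ⟶ Z) [Epi π]

noncomputable def ofEpiComplex : ChainComplex (ModuleCat.{u} R) ℕ :=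
  ChainComplex.mk' P (Projective.syzygies π) (Projective.d π)
    (fun f ↦ ⟨_, Projective.d f, Projective.d_comp f⟩)

omit [Projective P] [Epi π] in
lemma ofEpiComplex_d_one_zero : (ofEpiComplex π).d 1 0 = Projective.d π := by
  simp [ofEpiComplex]

omit [Projective P] [Epi π] in
lemma ofEpiComplex_exactAt_succ (n : ℕ) : (ofEpiComplex π).ExactAt (n + 1) := by
  rw [HomologicalComplex.exactAt_iff' _ (n + 1 + 1) (n + 1) n (by simp) (by simp)]
  dsimp [HomologicalComplex.sc', HomologicalComplex.shortComplexFunctor', ofEpiComplex,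
    ChainComplex.mk', ChainComplex.mk]
  simp only [ChainComplex.of.d, dif_pos, eqToHom_refl]
  match n with
  | 0 => apply exact_d_f
  | n + 1 => apply exact_d_f

instance (n : ℕ) : Projective ((ofEpiComplex π).X n) := by
  obtain (_ | _ | _ | n) := n
  · assumption
  all_goals apply Projective.projective_over

noncomputable def ofEpi : ProjectiveResolution Z where
  complex := ofEpiComplex π
  π := (ChainComplex.toSingle₀Equiv _ _).symm
    ⟨π, (ofEpiComplex_d_one_zero π).symm ▸ Projective.d_comp π⟩
  quasiIso := ⟨fun n ↦ by
    cases n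
    · rw [ChainComplex.quasiIsoAt₀_iff, ShortComplex.quasiIso_iff_of_zeros']
      · refine (ShortComplex.exact_and_epi_g_iff_of_iso ?_).2
          ⟨exact_d_f π, by dsimp; infer_instance⟩
        exact ShortComplex.isoMk (Iso.refl _) (Iso.refl _) (Iso.refl _) rfl rfl
      all_goals rfl
    · rw [quasiIsoAt_iff_exactAt']
      · apply ofEpiComplex_exactAt_succ
      · apply ChainComplex.exactAt_succ_single_obj⟩

lemma ofEpi_π_f_zero : (ofEpi π).π.f 0 = π :=
  ChainComplex.toSingle₀Equiv_symm_apply_f_zero _ _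

end OfEpi

variable {X : ModuleCat.{u} R} (P : ProjectiveResolution X)

lemma range_d_one_zero : range (P.complex.d 1 0).hom = ker (P.π.f 0).hom :=
  (ShortComplex.moduleCat_exact_iff_range_eq_ker _).mp P.exact₀

lemma range_d_succ (n : ℕ) :
    range (P.complex.d (n + 2) (n + 1)).hom = ker (P.complex.d (n + 1) n).hom :=
  (ShortComplex.moduleCat_exact_iff_range_eq_ker _).mp (P.exact_succ n)

end Ring

lemma subsingleton_ext_one_iff {R : Type u} [CommRing R] {X : ModuleCat.{u} R}
    (P : ProjectiveResolution X) (Y : ModuleCat.{u} R) :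
    Subsingleton (((Ext R (ModuleCat.{u} R) 1).obj (Opposite.op X)).obj Y) ↔
      (ker (P.π.f 0).hom).HasExtensionProperty Y := by
  rw [← ModuleCat.isZero_iff_subsingleton, (P.isoExt 1 Y).isZero_iff,
    ← HomologicalComplex.exactAt_iff_isZero_homology,
    HomologicalComplex.exactAt_iff' _ 0 1 2 (by simp) (by simp), ShortComplex.moduleCat_exact_iff,
    ← range_d_one_zero, range_hasExtensionProperty_iff (P.range_d_succ 0)]
  exact ModuleCat.homEquiv.forall_congr fun _ ↦ imp_congr ModuleCat.hom_ext_iff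
    (ModuleCat.homEquiv.exists_congr fun _ ↦ ModuleCat.hom_ext_iff)

end ProjectiveResolution

end CategoryTheory

lemma Ideal.subsingleton_ext_one_quotient_iff {R : Type u} [CommRing R] (I : Ideal R)
    (E : Type u) [AddCommGroup E] [Module R E] :
    Subsingleton (((Ext R (ModuleCat.{u} R) 1).obj
        (Opposite.op (ModuleCat.of R (R ⧸ I)))).obj (ModuleCat.of R E)) ↔
      I.HasExtensionProperty E := by
  have : Epi (ModuleCat.ofHom I.mkQ) := (ModuleCat.epi_iff_surjective _).mpr I.mkQ_surjective
  have : Projective (ModuleCat.of R R) := (IsProjective.iff_projective R).mp inferInstance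
  rw [(ProjectiveResolution.ofEpi (ModuleCat.ofHom I.mkQ)).subsingleton_ext_one_iff,
    ProjectiveResolution.ofEpi_π_f_zero]
  exact iff_of_eq (congrArg (Submodule.HasExtensionProperty · E) I.ker_mkQ)

namespace Ideal

variable {R Y : Type*} [CommRing R] [AddCommGroup Y] [Module R Y]

def IsDivided (P : Ideal R) : Prop :=
  ∀ x ∉ P, P ≤ span {x}

lemma IsDivided.le_of_not_le {P I : Ideal R} (hP : P.IsDivided) (hI : ¬ I ≤ P) : P ≤ I := by
  obtain ⟨x, hxI, hxP⟩ := SetLike.not_le_iff_exists.mp hI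
  exact (hP x hxP).trans ((span_singleton_le_iff_mem I).mpr hxI)

/-- Each `n ∈ P` is `a * x` with `x ∈ I \ P` and `a ∈ P`, and `a` kills `Y`. -/
lemma IsDivided.map_eq_zero {P I : Ideal R} [P.IsPrime] (hP : P.IsDivided) (hI : ¬ I ≤ P)
    [Module (R ⧸ P) Y] [IsScalarTower R (R ⧸ P) Y] (f : I →ₗ[R] Y) (n : R) (hn : n ∈ P) :
    f ⟨n, hP.le_of_not_le hI hn⟩ = 0 := by
  obtain ⟨x, hxI, hxP⟩ := SetLike.not_le_iff_exists.mp hI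
  obtain ⟨a, rfl⟩ := mem_span_singleton'.mp (hP x hxP hn)
  have ha : a ∈ P := (‹P.IsPrime›.mem_or_mem hn).resolve_right hxP
  calc f ⟨a * x, _⟩ = a • f ⟨x, hxI⟩ := map_smul f a ⟨x, hxI⟩
    _ = 0 := by
      rw [← algebraMap_smul (R ⧸ P), Quotient.algebraMap_eq, Quotient.eq_zero_iff_mem.mpr ha,
        zero_smul]

lemma hasExtensionProperty_map_iff {I I' : Ideal R} [Module (R ⧸ I) Y]
    [IsScalarTower R (R ⧸ I) Y] (hI : I ≤ I')
    (hvanish : ∀ f : I' →ₗ[R] Y, ∀ x (hx : x ∈ I), f ⟨x, hI hx⟩ = 0) :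
    (I'.map (Quotient.mk I)).HasExtensionProperty Y ↔ I'.HasExtensionProperty Y := by
  let q : I' →ₗ[R] I'.map (Quotient.mk I) :=
    { toFun x := ⟨Quotient.mk I x, mem_map_of_mem _ x.2⟩
      map_add' x y := by ext; simp
      map_smul' r x := by ext; simp [Algebra.smul_def] }
  have hq : Function.Surjective q := by
    rintro ⟨z, hz⟩
    obtain ⟨x, hx, rfl⟩ := (mem_map_iff_of_surjective _ Quotient.mk_surjective).mp hz
    exact ⟨⟨x, hx⟩, rfl⟩
  constructor
  · intro h f
    have hker : ker q ≤ ker f := fun x hx ↦ by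
      have : (x : R) ∈ I := Quotient.eq_zero_iff_mem.mp congr(Subtype.val $hx)
      simpa using hvanish f x this
    obtain ⟨f', hf'⟩ := hq.exists_comp_eq_of_ker_le hker
    obtain ⟨g, hg⟩ := h (f'.extendScalarsOfSurjective Quotient.mk_surjective)
    refine ⟨g.restrictScalars R ∘ₗ Algebra.linearMap R (R ⧸ I), ?_⟩
    ext x
    exact congr($hg (q x)).trans congr($hf' x)
  · intro h g
    obtain ⟨f, hf⟩ := h (g.restrictScalars R ∘ₗ q)
    refine ⟨toSpanSingleton _ _ (f 1), ?_⟩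
    ext z
    obtain ⟨⟨x, hx⟩, rfl⟩ := hq z
    calc Quotient.mk I x • f 1 = x • f 1 := algebraMap_smul (R ⧸ I) x (f 1)
      _ = f x := by rw [← map_smul, smul_eq_mul, mul_one]
      _ = g (q ⟨x, hx⟩) := congr($hf ⟨x, hx⟩)

end Ideal

/-- Let `R` be a φ-ring and `E` an `R/Nil(R)`-module, viewed as an
`R`-module (compatibly, via the quotient map). Then `E` is injective over `R/Nil(R)`
iff `E` is nonnil-injective over `R`, i.e. `Ext¹_R(R/I, E) = 0` for every nonnil ideal `I`. -/
theorem stmt_7 (R : Type u) [CommRing R]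
    (hp : (nilradical R).IsPrime)
    (hdiv : ∀ x ∉ nilradical R, nilradical R < Ideal.span {x})
    (E : Type u) [AddCommGroup E] [Module R E] [Module (R ⧸ nilradical R) E]
    [IsScalarTower R (R ⧸ nilradical R) E] :
    Module.Injective (R ⧸ nilradical R) E ↔
      (∀ I : Ideal R, ¬ I ≤ nilradical R →
        Subsingleton (((Ext R (ModuleCat.{u} R) 1).obj
          (Opposite.op (ModuleCat.of R (R ⧸ I)))).obj (ModuleCat.of R E))) := by
  have hdivided : (nilradical R).IsDivided := fun x hx ↦ (hdiv x hx).le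
  rw [← Module.Baer.iff_injective, Module.baer_iff_forall_hasExtensionProperty]
  constructor
  · intro hBaer I hI
    rw [Ideal.subsingleton_ext_one_quotient_iff]
    exact (Ideal.hasExtensionProperty_map_iff _ (hdivided.map_eq_zero hI)).mp (hBaer _)
  · intro hExt J
    obtain rfl | hJ := eq_or_ne J ⊥
    · exact Submodule.hasExtensionProperty_bot
    have hnonnil : ¬ J.comap (Ideal.Quotient.mk _) ≤ nilradical R := fun h ↦
      hJ <| le_bot_iff.mp <|
        (Ideal.comap_le_comap_iff_of_surjective _ Ideal.Quotient.mk_surjective _ _).mp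
          (h.trans Ideal.mk_ker.ge)
    rw [← Ideal.map_comap_of_surjective _ Ideal.Quotient.mk_surjective J,
      Ideal.hasExtensionProperty_map_iff _ (hdivided.map_eq_zero hnonnil),
      ← Ideal.subsingleton_ext_one_quotient_iff]
    exact hExt _ hnonnil
end

section
/- Let R be a φ-ring. If every R-module is nonnil-FP-injective, then every finitely generated nonnil ideal I of R satisfies I² = I; moreover R/I is a projective R-module for every such I. -/
/-!
In a projective resolution `P₁ → P₀ → T`, the map from `P₁` onto the kernel `K` of `P₀ → T` is a
`1`-cocycle with values in `K`. When `Ext¹(T, K) = 0` it extends to `P₀`, and the extension is a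
retraction of `K ↪ P₀`, so `T` is a direct summand of `P₀`. For `T = R ⧸ I` with `I` finitely
generated and nonnil, `T` is finitely presented and φ-torsion, hence projective; then `R ⧸ I` is
flat, i.e. `I` is pure, and pure ideals are idempotent.
-/

open CategoryTheory

/-- An `R`-module is φ-torsion if every element is annihilated by some nonnil ideal. -/
def IsPhiTorsion (R : Type*) [CommRing R] (M : Type*) [AddCommGroup M] [Module R M] : Prop :=
  ∀ x : M, ∃ I : Ideal R, ¬ I ≤ nilradical R ∧ ∀ a ∈ I, a • x = 0

namespace CategoryTheory

open Limits

variable {R : Type*} [Ring R] {C : Type*} [Category C] [Abelian C] [Linear R C]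
  [EnoughProjectives C]

lemma ProjectiveResolution.exists_comp_eq_of_subsingleton_ext_one {X Y : C}
    (P : ProjectiveResolution X) [Subsingleton (((Ext R C 1).obj (Opposite.op X)).obj Y)]
    (φ : P.complex.X 1 ⟶ Y) (hφ : P.complex.d 2 1 ≫ φ = 0) :
    ∃ ψ : P.complex.X 0 ⟶ Y, P.complex.d 1 0 ≫ ψ = φ := by
  have hzero : IsZero ((P.complex.linearYonedaObj R Y).homology 1) :=
    (ModuleCat.isZero_of_subsingleton _).of_iso (P.isoExt 1 Y).symm
  have hexact := (HomologicalComplex.exactAt_iff_isZero_homology _ _).2 hzero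
  rw [HomologicalComplex.exactAt_iff' _ 0 1 2 (by simp) (by simp),
    ShortComplex.moduleCat_exact_iff] at hexact
  exact hexact φ hφ

lemma Projective.of_subsingleton_ext_one {X : C}
    (h : ∀ Y : C, Subsingleton (((Ext R C 1).obj (Opposite.op X)).obj Y)) : Projective X := by
  obtain ⟨P⟩ : Nonempty (ProjectiveResolution X) := HasProjectiveResolution.out
  let φ : P.complex.X 1 ⟶ kernel (P.π.f 0) := kernel.lift _ _ P.complex_d_comp_π_f_zero
  have hφ : P.complex.d 2 1 ≫ φ = 0 := by
    ext
    simp only [φ, Category.assoc, kernel.lift_ι, HomologicalComplex.d_comp_d, zero_comp]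
  obtain ⟨ψ, hψ⟩ := P.exists_comp_eq_of_subsingleton_ext_one (R := R) φ hφ
  have : Epi φ := P.exact₀.epi_kernelLift
  have hretraction : kernel.ι (P.π.f 0) ≫ ψ = 𝟙 _ := by
    rw [← cancel_epi φ, kernel.lift_ι_assoc, hψ, Category.comp_id]
  let S := ShortComplex.mk (kernel.ι (P.π.f 0)) (P.π.f 0) (kernel.condition _)
  let splitting := ShortComplex.Splitting.ofExactOfRetraction S
    (S.exact_of_f_is_kernel (kernelIsKernel _)) ψ hretraction (inferInstanceAs (Epi (P.π.f 0)))
  exact Retract.projective ⟨splitting.s, P.π.f 0, splitting.s_g⟩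

end CategoryTheory

lemma Ideal.isPhiTorsion_quotient {R : Type*} [CommRing R] {I : Ideal R}
    (hI : ¬ I ≤ nilradical R) : IsPhiTorsion R (R ⧸ I) := by
  intro x
  refine ⟨I, hI, fun a ha => ?_⟩
  induction x using Submodule.Quotient.induction_on with
  | H y =>
    rw [← Submodule.Quotient.mk_smul, Submodule.Quotient.mk_eq_zero, smul_eq_mul]
    exact I.mul_mem_right y ha

lemma Ideal.finitePresentation_quotient {R : Type*} [CommRing R] {I : Ideal R} (hI : I.FG) :
    Module.FinitePresentation R (R ⧸ I) :=
  Module.finitePresentation_of_surjective I.mkQ I.mkQ_surjective (by rwa [I.ker_mkQ])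

theorem stmt_12_general (R : Type u) [CommRing R]
    (h : ∀ (M : ModuleCat.{u} R) (T : ModuleCat.{u} R),
      Module.FinitePresentation R T → IsPhiTorsion R T →
      Subsingleton (((Ext R (ModuleCat.{u} R) 1).obj (Opposite.op T)).obj M)) :
    ∀ I : Ideal R, I.FG → ¬ I ≤ nilradical R →
      I * I = I ∧ Module.Projective R (R ⧸ I) := by
  intro I hFG hI
  have : Module.Projective R (R ⧸ I) :=
    (IsProjective.iff_projective (ModuleCat.of R (R ⧸ I))).2 <| Projective.of_subsingleton_ext_one
      fun M => h M _ (Ideal.finitePresentation_quotient hFG) (Ideal.isPhiTorsion_quotient hI)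
  exact ⟨I.isIdempotentElem_of_pure, this⟩

/-- Let `R` be a φ-ring. If every `R`-module is nonnil-FP-injective, then
every finitely generated nonnil ideal `I` satisfies `I² = I` and `R/I` is projective. -/
theorem stmt_12 (R : Type u) [CommRing R]
    (hp : (nilradical R).IsPrime)
    (hdiv : ∀ x ∉ nilradical R, nilradical R < Ideal.span {x})
    (h : ∀ (M : ModuleCat.{u} R) (T : ModuleCat.{u} R),
      Module.FinitePresentation R T → IsPhiTorsion R T →
      Subsingleton (((Ext R (ModuleCat.{u} R) 1).obj (Opposite.op T)).obj M)) :
    ∀ I : Ideal R, I.FG → ¬ I ≤ nilradical R →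
      I * I = I ∧ Module.Projective R (R ⧸ I) :=
  stmt_12_general R h
end
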